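/- For every integer n ≥ 1, 0 = 2n · ((-1)^n (1/2)_n / n!) + Σ_{j=1}^{n} (C_{j-1} · (-1)^{n-j} · (1/2)_{n+j}) / ((1/2)_{2j} · (n-j)!), where C_j = (1/(j+1))·binomial(2j, j) is the j-th Catalan number and (a)_k denotes the rising factorial. -/

import Mathlib

/-!
By `(-1)^k (a)_k / k! = choose (-a) k` (the generalized binomial coefficient `Ring.choose`), the
`j`-th summand is `C_{j-1} * choose (-(2j + 1/2)) (n - j)`, the coefficient of `x^n` in
`C_{j-1} x^j (1+x)^{-(2j-1)} (1+x)^{-3/2}`. With `y = x/(1+x)^2` the Catalan series gives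
`∑_j C_{j-1} x^j (1+x)^{-(2j-1)} = (1+x) y C(y) = x`, so the sum is `choose (-3/2) (n-1)`, which is
`-2n choose (-1/2) n`. Coefficientwise, the Catalan step is `∑_{p+i=m} C_p choose (-(2p+1)) i = δ_{m,0}`;
after multiplying by `m + 1` it becomes the Chu–Vandermonde identity for `-(m+1) + (m+1) = 0`.
-/

open Finset
open scoped Nat

noncomputable def rf (a : ℚ) (k : ℕ) : ℚ := (ascPochhammer ℚ k).eval a

theorem Finset.sum_antidiagonal_sum_antidiagonal {A M : Type*} [AddCommMonoid A]
    [HasAntidiagonal A] [AddCommMonoid M] (f : A → A → A → M) (n : A) :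
    ∑ x ∈ antidiagonal n, ∑ y ∈ antidiagonal x.2, f x.1 y.1 y.2 =
      ∑ x ∈ antidiagonal n, ∑ y ∈ antidiagonal x.1, f y.1 y.2 x.2 := by
  rw [sum_sigma', sum_sigma']
  refine sum_nbij' (fun x ↦ ⟨(x.1.1 + x.2.1, x.2.2), (x.1.1, x.2.1)⟩)
    (fun x ↦ ⟨(x.2.1, x.2.2 + x.1.2), (x.2.2, x.1.2)⟩) ?_ ?_ ?_ ?_ ?_ <;>
    aesop (add simp [add_assoc])

theorem rf_add (a : ℚ) (m k : ℕ) : rf a (m + k) = rf a m * rf (a + m) k := by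
  simp [rf, ← ascPochhammer_mul, Polynomial.eval_comp]

theorem Ring.choose_neg_eq_rf (a : ℚ) (k : ℕ) : Ring.choose (-a) k = (-1) ^ k * rf a k / k ! := by
  rw [Ring.choose_neg', eq_div_iff (by positivity), rf, ← Polynomial.ascPochhammer_smeval_eq_eval,
    ← Ring.factorial_nsmul_multichoose_eq_ascPochhammer, Units.smul_def, zsmul_eq_mul,
    Int.cast_negOnePow_natCast, nsmul_eq_mul]
  ring

theorem Ring.choose_neg_add_eq_rf_div (a : ℚ) (m k : ℕ) (h : rf a m ≠ 0) :
    Ring.choose (-(a + m)) k = (-1) ^ k * rf a (m + k) / (rf a m * k !) := by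
  rw [Ring.choose_neg_eq_rf, rf_add, mul_comm (rf a m), ← mul_div_mul_right _ _ h]
  ring

theorem Ring.add_one_mul_choose_neg_succ (a : ℚ) (k : ℕ) :
    (k + 1) * Ring.choose (-a) (k + 1) = -a * Ring.choose (-(a + 1)) k := by
  rw [Ring.choose_neg_eq_rf, Ring.choose_neg_eq_rf, Nat.factorial_succ, add_comm k 1, rf_add,
    rf, ascPochhammer_one, Polynomial.eval_X, Nat.cast_one]
  push_cast
  field_simp
  ring

theorem Ring.choose_neg_natCast_add_one {R : Type*} [Ring R] [BinomialRing R] (r k : ℕ) :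
    Ring.choose (-((r : R) + 1)) k = (-1) ^ k * ((r + k).choose k : R) := by
  rw [Ring.choose_neg, show (r : R) + 1 + k - 1 = ((r + k : ℕ) : R) by push_cast; abel,
    Ring.choose_natCast, Units.smul_def, zsmul_eq_mul, Int.cast_negOnePow_natCast]

theorem add_succ_mul_catalan_mul_choose (p i : ℕ) :
    (p + i + 1) * (catalan p * (2 * p + i).choose i) =
      (2 * p + i).choose p * (p + i + 1).choose i := by
  have hcentral : (p + 1) * catalan p = (2 * p).choose p := by
    rw [succ_mul_catalan_eq_centralBinom, Nat.centralBinom_eq_two_mul_choose]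
  have hmul : (2 * p + i).choose (2 * p) * (2 * p).choose p =
      (2 * p + i).choose p * (p + i).choose p := by
    rw [Nat.choose_mul (by omega)]
    congr 2 <;> omega
  have habsorb : (p + i + 1) * (p + i).choose p = (p + i + 1).choose i * (p + 1) := by
    rw [Nat.add_one_mul_choose_eq, Nat.choose_symm_of_eq_add (by omega : p + i + 1 = (p + 1) + i)]
  apply Nat.eq_of_mul_eq_mul_left (Nat.succ_pos p)
  calc (p + 1) * ((p + i + 1) * (catalan p * (2 * p + i).choose i))
      = (p + i + 1) * ((2 * p + i).choose (2 * p) * (2 * p).choose p) := by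
        rw [← hcentral, Nat.choose_symm_add]; ring
    _ = (p + 1) * ((2 * p + i).choose p * (p + i + 1).choose i) := by
        rw [hmul, ← mul_assoc, mul_comm (p + i + 1), mul_assoc, habsorb]; ring

theorem sum_antidiagonal_catalan_mul_choose_neg (m : ℕ) :
    ∑ x ∈ antidiagonal m, (catalan x.1 : ℚ) * Ring.choose (-(2 * x.1 + 1 : ℚ)) x.2 =
      if m = 0 then 1 else 0 := by
  have hterm : ∀ x ∈ antidiagonal m,
      ((m : ℚ) + 1) * ((catalan x.1 : ℚ) * Ring.choose (-(2 * x.1 + 1 : ℚ)) x.2) =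
        (-1) ^ m * (Ring.choose (-((m : ℚ) + 1)) x.1 * Ring.choose ((m : ℚ) + 1) x.2) := by
    rintro ⟨p, i⟩ hx
    obtain rfl : p + i = m := mem_antidiagonal.mp hx
    have key := congrArg (Nat.cast (R := ℚ)) (add_succ_mul_catalan_mul_choose p i)
    rw [show (2 * p + 1 : ℚ) = ((2 * p : ℕ) : ℚ) + 1 by push_cast; ring,
      Ring.choose_neg_natCast_add_one, Ring.choose_neg_natCast_add_one,
      show ((p + i : ℕ) : ℚ) + 1 = ((p + i + 1 : ℕ) : ℚ) by push_cast; ring, Ring.choose_natCast,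
      show p + i + p = 2 * p + i by ring, pow_add]
    have hsq : ((-1 : ℚ) ^ p) ^ 2 = 1 := by rw [← pow_mul, mul_comm, pow_mul, neg_one_sq, one_pow]
    push_cast at key ⊢
    linear_combination (-1 : ℚ) ^ i * key -
      (-1 : ℚ) ^ i * ((2 * p + i).choose p * (p + i + 1).choose i : ℚ) * hsq
  have hvandermonde : ∑ x ∈ antidiagonal m,
      Ring.choose (-((m : ℚ) + 1)) x.1 * Ring.choose ((m : ℚ) + 1) x.2 = Ring.choose (0 : ℚ) m := by
    rw [← Ring.add_choose_eq m (Commute.all _ _), neg_add_cancel]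
  apply mul_left_cancel₀ (by positivity : (m : ℚ) + 1 ≠ 0)
  rw [mul_sum, sum_congr rfl hterm, ← mul_sum, hvandermonde, Ring.choose_zero_ite]
  split_ifs with h <;> simp [h]

theorem sum_antidiagonal_catalan_mul_choose_neg_add (N : ℕ) (r : ℚ) :
    ∑ x ∈ antidiagonal N, (catalan x.1 : ℚ) * Ring.choose (-(2 * x.1 + 1 : ℚ) + r) x.2 =
      Ring.choose r N := by
  calc _ = ∑ x ∈ antidiagonal N, ∑ y ∈ antidiagonal x.2,
        (catalan x.1 : ℚ) * Ring.choose (-(2 * x.1 + 1 : ℚ)) y.1 * Ring.choose r y.2 := by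
        simp_rw [Ring.add_choose_eq (R := ℚ) _ (Commute.all _ _), mul_sum, mul_assoc]
    _ = ∑ x ∈ antidiagonal N, (∑ y ∈ antidiagonal x.1,
        (catalan y.1 : ℚ) * Ring.choose (-(2 * y.1 + 1 : ℚ)) y.2) * Ring.choose r x.2 := by
        simp_rw [sum_antidiagonal_sum_antidiagonal (fun p i k ↦ (catalan p : ℚ) *
          Ring.choose (-(2 * p + 1 : ℚ)) i * Ring.choose r k), sum_mul]
    _ = Ring.choose r N := by
        simp only [sum_antidiagonal_catalan_mul_choose_neg, ite_mul, one_mul, zero_mul]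
        rw [Nat.sum_antidiagonal_eq_sum_range_succ_mk, sum_range_succ']
        simp

theorem sum_Icc_catalan_mul_rf_eq (N : ℕ) :
    ∑ j ∈ Icc 1 (N + 1), ((catalan (j - 1) : ℚ) * (-1) ^ (N + 1 - j) * rf (1/2) (N + 1 + j)) /
        (rf (1/2) (2 * j) * (N + 1 - j)!) =
      ∑ x ∈ antidiagonal N, (catalan x.1 : ℚ) * Ring.choose (-(2 * x.1 + 1 : ℚ) + -(3/2)) x.2 := by
  rw [Nat.sum_antidiagonal_eq_sum_range_succ_mk, ← Ico_add_one_right_eq_Icc,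
    sum_Ico_eq_sum_range, Nat.add_sub_cancel]
  refine sum_congr rfl fun p hp ↦ ?_
  obtain ⟨t, rfl⟩ : ∃ t, N = p + t := ⟨N - p, by rw [mem_range] at hp; omega⟩
  rw [show -(2 * p + 1 : ℚ) + -(3/2) = -(1/2 + ((2 * (1 + p) : ℕ) : ℚ)) by push_cast; ring,
    Ring.choose_neg_add_eq_rf_div _ _ _ (ascPochhammer_pos _ _ (by norm_num)).ne',
    show p + t + 1 + (1 + p) = 2 * (1 + p) + (p + t - p) by omega,
    show p + t + 1 - (1 + p) = p + t - p by omega, Nat.add_sub_cancel_left]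
  ring

theorem stmt_5 (n : ℕ) (hn : 1 ≤ n) :
    (0 : ℚ) = 2 * n * ((-1 : ℚ) ^ n * rf (1/2) n / (n.factorial : ℚ)) +
      ∑ j ∈ Finset.Icc 1 n,
        ((catalan (j - 1) : ℚ) * (-1 : ℚ) ^ (n - j) * rf (1/2) (n + j)) /
          (rf (1/2) (2 * j) * ((n - j).factorial : ℚ)) := by
  obtain ⟨N, rfl⟩ : ∃ N, n = N + 1 := ⟨n - 1, by omega⟩
  have hlhs : 2 * ((N + 1 : ℕ) : ℚ) * ((-1) ^ (N + 1) * rf (1/2) (N + 1) / (N + 1)!) =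
      -Ring.choose (-(3/2) : ℚ) N := by
    have habsorb := Ring.add_one_mul_choose_neg_succ (1/2) N
    rw [Ring.choose_neg_eq_rf] at habsorb
    norm_num at habsorb ⊢
    linear_combination (2 : ℚ) * habsorb
  rw [hlhs, sum_Icc_catalan_mul_rf_eq, sum_antidiagonal_catalan_mul_choose_neg_add]
  ring
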